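/- arXiv:1102.5110 — 3 statements merged into one kernel-verified Lean document; each statement's English description precedes it below -/
import Mathlib

section
/- Given r > 0 and α > 0, there exist constants a, b ∈ ℝ and c > 0 such that the grim reaper curve u : (−π/(2c), π/(2c)) → ℝ², u(s) = (log(sec(c s))/c − a, s − b), satisfies: (1) the open square (−r,r) × (−r,r) is contained in the interior of the convex hull of the image of u; and (2) for every s ∈ (0, π/(2c)) with s − b ≥ −r, the slope of the tangent line to the curve at u(s), which equals cot(c s), satisfies 0 < cot(c s) ≤ α. -/
/-!
Put `θ = arctan (1/α)` and scale by `c` so that `s ↦ c s` maps `[b - r, b + r]` into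
`[θ, π/2)`; on the part of the curve with `y ≥ -r` the slope `cot (c s)` is then at most
`cot θ = α`. The curve is symmetric about the line `y = -b` and its `x`-coordinate tends to `∞`
at both ends of the parameter interval. With `a` chosen so that `u(b + r) = (-r, r)`, the points
`u(±(b + r))` lie on the line `x = -r` at heights `r` and `-2b - r ≤ -r`, and points `u(±s)`
with `s` near `π/(2c)` lie on a line `x = x₀ ≥ r` at heights `≥ r` and `≤ -r`; a convex set
containing four such points contains the closed square.
-/

open Set Real Filter Topology

section Rectangle

variable {𝕜 : Type*} [Field 𝕜] [LinearOrder 𝕜] [IsStrictOrderedRing 𝕜] {C : Set (𝕜 × 𝕜)}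

theorem Convex.Icc_prod_Icc_subset (hC : Convex 𝕜 C) {x₁ x₂ y₁ y₂ : 𝕜} (hx : x₁ ≤ x₂)
    (hy : y₁ ≤ y₂) (h₁₁ : (x₁, y₁) ∈ C) (h₁₂ : (x₁, y₂) ∈ C) (h₂₁ : (x₂, y₁) ∈ C)
    (h₂₂ : (x₂, y₂) ∈ C) : Icc x₁ x₂ ×ˢ Icc y₁ y₂ ⊆ C := by
  rw [← segment_eq_Icc hx, ← segment_eq_Icc hy, ← convexHull_pair, ← convexHull_pair,
    ← convexHull_prod]
  refine convexHull_min ?_ hC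
  rintro ⟨x, y⟩ ⟨rfl | rfl, rfl | rfl⟩ <;> assumption

theorem Convex.Icc_prod_Icc_subset_of_mem (hC : Convex 𝕜 C)
    {u₁ u₂ v₁ v₂ x₁ x₂ y₁ y₂ z₁ z₂ : 𝕜} (hx₁ : x₁ ≤ u₁) (hx₂ : u₂ ≤ x₂)
    (hy₁ : y₁ ≤ v₁) (hy₂ : v₂ ≤ y₂) (hz₁ : z₁ ≤ v₁) (hz₂ : v₂ ≤ z₂)
    (h₁₁ : (x₁, y₁) ∈ C) (h₁₂ : (x₁, y₂) ∈ C) (h₂₁ : (x₂, z₁) ∈ C) (h₂₂ : (x₂, z₂) ∈ C) :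
    Icc u₁ u₂ ×ˢ Icc v₁ v₂ ⊆ C := by
  rintro p ⟨hpx, hpy⟩
  have hv : v₁ ≤ v₂ := hpy.1.trans hpy.2
  have vertical {x y₁ y₂ y : 𝕜} (hy₁ : y₁ ≤ y) (hy₂ : y ≤ y₂) (h₁ : (x, y₁) ∈ C)
      (h₂ : (x, y₂) ∈ C) : (x, y) ∈ C :=
    hC.Icc_prod_Icc_subset le_rfl (hy₁.trans hy₂) h₁ h₂ h₁ h₂ ⟨left_mem_Icc.2 le_rfl, hy₁, hy₂⟩
  exact hC.Icc_prod_Icc_subset (hx₁.trans (hpx.1.trans (hpx.2.trans hx₂))) hv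
    (vertical hy₁ (hv.trans hy₂) h₁₁ h₁₂) (vertical (hy₁.trans hv) hy₂ h₁₁ h₁₂)
    (vertical hz₁ (hv.trans hz₂) h₂₁ h₂₂) (vertical (hz₁.trans hv) hz₂ h₂₁ h₂₂)
    ⟨Icc_subset_Icc hx₁ hx₂ hpx, hpy⟩

end Rectangle

noncomputable def grimReaper (a b c s : ℝ) : ℝ × ℝ := (log (1 / cos (c * s)) / c - a, s - b)

theorem grimReaper_neg (a b c s : ℝ) :
    grimReaper a b c (-s) = ((grimReaper a b c s).1, -s - b) := by
  simp [grimReaper]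

theorem mul_lt_pi_div_two_iff {c s : ℝ} (hc : 0 < c) : c * s < π / 2 ↔ s < π / (2 * c) := by
  rw [← div_div, lt_div_iff₀' hc]

theorem tendsto_log_one_div_cos_nhdsLT_pi_div_two :
    Tendsto (fun t ↦ log (1 / cos t)) (𝓝[<] (π / 2)) atTop := by
  simp only [one_div]
  exact tendsto_log_atTop.comp tendsto_cos_pi_div_two.inv_tendsto_nhdsGT_zero

theorem tendsto_const_mul_nhdsLT_pi_div_two {c : ℝ} (hc : 0 < c) :
    Tendsto (c * ·) (𝓝[<] (π / (2 * c))) (𝓝[<] (π / 2)) := by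
  refine tendsto_nhdsWithin_of_tendsto_nhds_of_eventually_within _ ?_ ?_
  · convert ((continuous_const_mul c).tendsto _).mono_left nhdsWithin_le_nhds using 2
    field_simp
  · filter_upwards [self_mem_nhdsWithin] with s hs
    exact (mul_lt_pi_div_two_iff hc).2 hs

theorem tendsto_grimReaper_fst (a b : ℝ) {c : ℝ} (hc : 0 < c) :
    Tendsto (fun s ↦ (grimReaper a b c s).1) (𝓝[<] (π / (2 * c))) atTop := by
  simp only [grimReaper, sub_eq_add_neg]
  exact tendsto_atTop_add_const_right _ _
    ((tendsto_log_one_div_cos_nhdsLT_pi_div_two.comp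
      (tendsto_const_mul_nhdsLT_pi_div_two hc)).atTop_div_const hc)

theorem Icc_prod_Icc_subset_convexHull_grimReaper {b c r : ℝ} (hc : 0 < c) (hb : 0 ≤ b)
    (hr : 0 ≤ r) (hbr : c * (b + r) < π / 2) :
    Icc (-r) r ×ˢ Icc (-r) r ⊆ convexHull ℝ (grimReaper (log (1 / cos (c * (b + r))) / c + r) b c ''
      Ioo (-(π / (2 * c))) (π / (2 * c))) := by
  set a := log (1 / cos (c * (b + r))) / c + r
  set I := Ioo (-(π / (2 * c))) (π / (2 * c))
  have mem_hull {s : ℝ} (hs₀ : 0 ≤ s) (hs : s < π / (2 * c)) :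
      grimReaper a b c s ∈ convexHull ℝ (grimReaper a b c '' I) ∧
        grimReaper a b c (-s) ∈ convexHull ℝ (grimReaper a b c '' I) :=
    have hI : 0 < π / (2 * c) := hs₀.trans_lt hs
    ⟨subset_convexHull ℝ _ (mem_image_of_mem _ ⟨by linarith, hs⟩),
      subset_convexHull ℝ _ (mem_image_of_mem _ ⟨by linarith, by linarith⟩)⟩
  have hbrI : b + r < π / (2 * c) := (mul_lt_pi_div_two_iff hc).1 hbr
  obtain ⟨s, hsa, hbs, hsI⟩ :=
    (((tendsto_grimReaper_fst a b hc).eventually_ge_atTop r).and (Ioo_mem_nhdsLT hbrI)).exists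
  obtain ⟨h₁₂, h₁₁⟩ := mem_hull (by linarith) hbrI
  obtain ⟨h₂₂, h₂₁⟩ := mem_hull (by linarith) hsI
  rw [grimReaper_neg] at h₁₁ h₂₁
  have hleft : grimReaper a b c (b + r) = (-r, r) := by simp [grimReaper, a]
  rw [hleft] at h₁₂ h₁₁
  exact (convex_convexHull ℝ _).Icc_prod_Icc_subset_of_mem (z₂ := s - b) le_rfl hsa
    (by linarith) le_rfl (by linarith) (by linarith) h₁₁ h₁₂ h₂₁ h₂₂

theorem cot_pos_and_cot_le_of_arctan_inv_le {α t : ℝ} (hα : 0 < α) (ht : arctan α⁻¹ ≤ t)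
    (ht' : t < π / 2) : 0 < cot t ∧ cot t ≤ α := by
  have ht₀ : 0 < t := (arctan_pos.2 (inv_pos.2 hα)).trans_le ht
  have htan : α⁻¹ ≤ tan t := by
    rwa [← arctan_strictMono.le_iff_le, arctan_tan (by linarith) ht']
  rw [cot_eq_cos_div_sin, ← inv_div, ← tan_eq_sin_div_cos]
  exact ⟨inv_pos.2 ((inv_pos.2 hα).trans_le htan), inv_le_of_inv_le₀ hα htan⟩

/-- **grim reaper with controlled slope.** Given `r, α > 0` there are
`a, b ∈ ℝ` and `c > 0` such that the grim reaper `u(s) = (log(sec(cs))/c − a, s − b)`,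
`s ∈ (−π/(2c), π/(2c))`, satisfies: the open square `(−r,r)²` lies in the interior of the
convex hull of the curve, and for every `s ∈ (0, π/(2c))` with `s − b ≥ −r` the slope
`cot(cs)` of the tangent at `u(s)` satisfies `0 < cot(cs) ≤ α`. -/
theorem stmt7 (r α : ℝ) (hr : 0 < r) (hα : 0 < α) :
    ∃ a b c : ℝ, 0 < c ∧
      (Ioo (-r) r ×ˢ Ioo (-r) r ⊆
        interior (convexHull ℝ
          ((fun s : ℝ => (Real.log (1 / Real.cos (c * s)) / c - a, s - b)) ''
            Ioo (-(π / (2 * c))) (π / (2 * c))))) ∧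
      (∀ s ∈ Ioo (0:ℝ) (π / (2 * c)), -r ≤ s - b →
        0 < Real.cot (c * s) ∧ Real.cot (c * s) ≤ α) := by
  set θ := arctan α⁻¹
  have hθ₀ : 0 < θ := arctan_pos.2 (inv_pos.2 hα)
  have hθ₁ : θ < π / 2 := arctan_lt_pi_div_two _
  set c := (π / 2 - θ) / (4 * r)
  have hc : 0 < c := div_pos (by linarith) (by linarith)
  set b := r + θ / c
  have hcb : c * (b - r) = θ := by simp only [b, add_sub_cancel_left, mul_div_cancel₀ _ hc.ne']
  have hcb' : c * (b + r) < π / 2 := by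
    have hcr : 2 * c * r = (π / 2 - θ) / 2 := by simp only [c]; field_simp; ring
    linarith [show c * (b + r) = c * (b - r) + 2 * c * r by ring]
  refine ⟨log (1 / cos (c * (b + r))) / c + r, b, c, hc, ?_, fun s hs hsb ↦ ?_⟩
  · calc Ioo (-r) r ×ˢ Ioo (-r) r = interior (Icc (-r) r ×ˢ Icc (-r) r) := by
          rw [interior_prod_eq, interior_Icc]
      _ ⊆ _ := interior_mono
          (Icc_prod_Icc_subset_convexHull_grimReaper hc (by positivity) hr.le hcb')
  · exact cot_pos_and_cot_le_of_arctan_inv_le hα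
      (hcb.symm.trans_le (mul_le_mul_of_nonneg_left (by linarith) hc.le))
      ((mul_lt_pi_div_two_iff hc).2 hs.2)
end

section
/- For every continuous map u : S¹ → ℝ² and every r > 0, the r-multiplicity M_r(u) is finite. In fact, if δ > 0 is such that d_{S¹}(x,y) < δ implies |u(x) − u(y)| < r for all x, y ∈ S¹, then M_r(u) ≤ 2π/δ. -/
open Set Function Metric MeasureTheory Real Filter
open scoped ENNReal NNReal

noncomputable section

abbrev E2 : Type := EuclideanSpace ℝ (Fin 2)

abbrev S1 : Type := AddCircle (2 * π)

instance : Fact (0 < 2 * π) := ⟨by positivity⟩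

/-- Lift of a map `ℝ → E2` to the circle `S1 = ℝ/2πℤ`, via the fundamental domain `[0, 2π)`.
For a `2π`-periodic map this is the genuine induced map on the circle. -/
def clift (f : ℝ → E2) : S1 → E2 := fun x => f ((AddCircle.equivIco (2 * π) 0 x : ℝ))

/-- Curvature vector of a curve at a point: the component of `c''/|c'|²` orthogonal to `c'`. -/
def curvVec (c : ℝ → E2) (x : ℝ) : E2 :=
  (‖deriv c x‖ ^ 2)⁻¹ • deriv (deriv c) x -
    ((inner ℝ (deriv (deriv c) x) (deriv c x) : ℝ) / ‖deriv c x‖ ^ 4) • deriv c x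

/-- Length of a closed curve parametrized with period `2π`. -/
def curveLength (c : ℝ → E2) : ℝ := ∫ x in (0:ℝ)..(2 * π), ‖deriv c x‖

/-- Open `ρ`-neighbourhood of the line through `q` with unit normal `n`. -/
def lineStrip (q n : E2) (ρ : ℝ) : Set E2 := {p | |(inner ℝ (p - q) n : ℝ)| < ρ}

/-- The connected components of `u ⁻¹ (𝒩_{r/2}(ℓ))` whose image's closure meets both
components of the boundary of the strip; the line `ℓ` passes through `q` with unit normal `n`. -/
def MrlSet (u : S1 → E2) (r : ℝ) (q n : E2) : Set (Set S1) :=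
  {I | (∃ x ∈ u ⁻¹' lineStrip q n (r / 2),
          I = connectedComponentIn (u ⁻¹' lineStrip q n (r / 2)) x) ∧
       (∃ p ∈ closure (u '' I), (inner ℝ (p - q) n : ℝ) = r / 2) ∧
       (∃ p ∈ closure (u '' I), (inner ℝ (p - q) n : ℝ) = -(r / 2))}

def Mrl (u : S1 → E2) (r : ℝ) (q n : E2) : ℕ∞ := (MrlSet u r q n).encard

/-- The `r`-multiplicity of a map `u : S¹ → ℝ²`. -/
def Mr (u : S1 → E2) (r : ℝ) : ℕ∞ := ⨆ (q : E2) (n : E2) (_ : ‖n‖ = 1), Mrl u r q n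

/-- Intersection number of a closed curve. -/
def Icount (u : S1 → E2) : ℕ∞ := {x : S1 | ∃ y, y ≠ x ∧ u y = u x}.encard

/-- Curve shortening flow equation on a time set `I` (space variable first). -/
def IsCSFOn (γ : ℝ → ℝ → E2) (I : Set ℝ) : Prop :=
  ∀ x : ℝ, ∀ t ∈ I, HasDerivWithinAt (fun s => γ x s) (curvVec (fun y => γ y t) x) I t

/-- A smooth solution of curve shortening flow by closed (`2π`-periodic) immersed curves. -/
def IsSmoothClosedCSF (γ : ℝ → ℝ → E2) (I : Set ℝ) : Prop :=
  (∀ t ∈ I, Function.Periodic (fun x => γ x t) (2 * π)) ∧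
  ContDiffOn ℝ (⊤ : ℕ∞) (fun p : ℝ × ℝ => γ p.1 p.2) (univ ×ˢ I) ∧
  (∀ t ∈ I, ∀ x : ℝ, deriv (fun y => γ y t) x ≠ 0) ∧
  IsCSFOn γ I

/-- The time-`t` curve of the family is embedded (injective on the circle). -/
def IsEmbeddedAt (γ : ℝ → ℝ → E2) (t : ℝ) : Prop :=
  ∀ x y : ℝ, γ x t = γ y t → ∃ k : ℤ, y = x + 2 * π * k

/-- Weak set flow for a compact `K ⊆ ℝ²`. -/
def IsWeakSetFlow (K : Set E2) (F : ℝ → Set E2) : Prop :=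
  F 0 = K ∧ (∀ t : ℝ, 0 ≤ t → IsCompact (F t)) ∧
  IsClosed {p : E2 × ℝ | 0 ≤ p.2 ∧ p.1 ∈ F p.2} ∧
  ∀ a b : ℝ, 0 ≤ a → a ≤ b → ∀ c : ℝ → ℝ → E2,
    IsSmoothClosedCSF c (Icc a b) → (∀ t ∈ Icc a b, IsEmbeddedAt c t) →
    F a ∩ range (fun x => c x a) = ∅ →
    ∀ t ∈ Icc a b, F t ∩ range (fun x => c x t) = ∅

/-- The level set flow: the maximal weak set flow. -/
def IsLevelSetFlow (K : Set E2) (F : ℝ → Set E2) : Prop :=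
  IsWeakSetFlow K F ∧ ∀ G : ℝ → Set E2, IsWeakSetFlow K G → ∀ t : ℝ, 0 ≤ t → G t ⊆ F t

/-- `S` is the image of a smooth embedded closed curve `S¹ → ℝ²`. -/
def IsSmoothClosedCurveSet (S : Set E2) : Prop :=
  ∃ c : ℝ → E2, Function.Periodic c (2 * π) ∧ ContDiff ℝ (⊤ : ℕ∞) c ∧
    (∀ x, deriv c x ≠ 0) ∧ (∀ x y, c x = c y → ∃ k : ℤ, y = x + 2 * π * k) ∧ range c = S



lemma S1.norm_le_pi (x : S1) : ‖x‖ ≤ π := by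
  have := AddCircle.norm_le_half_period (p := 2*π) (x := x) (by positivity : (0:ℝ) < 2*π).ne'
  rw [abs_of_pos (by positivity : (0:ℝ) < 2*π)] at this; linarith

lemma S1.norm_coe_le (z : ℝ) : ‖(z : S1)‖ ≤ |z| := by
  simpa using (QuotientAddGroup.norm_mk_le_norm : ‖((z : ℝ) : ℝ ⧸ AddSubgroup.zmultiples (2*π))‖ ≤ ‖z‖)

lemma S1.lift_of_norm_lt (z : ℝ) {s : ℝ} (h : ‖(z : S1)‖ < s) :
    ∃ v : ℝ, (v : S1) = (z : S1) ∧ |v| < s := by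
  have h0 : ((round ((2*π)⁻¹*z) * (2*π) : ℝ) : S1) = 0 := by
    rw [← zsmul_eq_mul, AddCircle.coe_zsmul, AddCircle.coe_period, smul_zero]
  refine ⟨z - round ((2*π)⁻¹ * z) * (2*π), ?_, by rwa [← AddCircle.norm_eq]⟩
  rw [QuotientAddGroup.mk_sub, h0, sub_zero]

lemma comp_eq_image {S : Set S1} (hS : IsOpen S) {α : ℝ} (hα : (α : S1) ∈ S) :
    connectedComponentIn S (α : S1)
      = ((↑) : ℝ → S1) '' connectedComponentIn (((↑) : ℝ → S1) ⁻¹' S) α := by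
  set cm : ℝ → S1 := ((↑) : ℝ → S1) with hcm
  set J : Set ℝ := cm ⁻¹' S with hJdef
  set K := connectedComponentIn J α with hKdef
  have hαJ : α ∈ J := hα
  have hKJ : K ⊆ J := connectedComponentIn_subset J α
  have hUsub : cm '' K ⊆ connectedComponentIn S (α : S1) :=
    (isPreconnected_connectedComponentIn.image cm continuous_quotient_mk'.continuousOn).subset_connectedComponentIn
      ⟨α, mem_connectedComponentIn hαJ, rfl⟩ (image_subset_iff.2 hKJ)
  refine subset_antisymm ?_ hUsub
  have hclos : ∀ x ∈ S, x ∈ closure (cm '' K) → x ∈ cm '' K := by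
    intro x hxS hxcl
    obtain ⟨s, hs0, hball⟩ := Metric.isOpen_iff.1 hS x hxS
    obtain ⟨x', hx'K, hx'd⟩ := Metric.mem_closure_iff.1 hxcl s hs0
    obtain ⟨y, hyK, rfl⟩ := hx'K
    obtain ⟨β₀, hβ₀⟩ := QuotientAddGroup.mk_surjective x
    have hn : ‖((y - β₀ : ℝ) : S1)‖ < s := by
      rw [QuotientAddGroup.mk_sub, hβ₀, ← dist_eq_norm, dist_comm]
      exact hx'd
    obtain ⟨v, hv, hvs⟩ := S1.lift_of_norm_lt _ hn
    have hv' : (v : S1) = cm y - x := by rw [hv, QuotientAddGroup.mk_sub, hβ₀]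
    set β' := y - v with hβ'def
    have hβ'x : cm β' = x := by
      show ((y - v : ℝ) : S1) = x
      rw [QuotientAddGroup.mk_sub, hv', sub_sub_cancel]
    have hyβ' : |y - β'| < s := by rw [hβ'def]; simpa using hvs
    have hseg : uIcc y β' ⊆ J := by
      intro w hw
      have h1 : |w - β'| ≤ |y - β'| := by
        rcases Set.mem_uIcc.1 hw with ⟨h1, h2⟩ | ⟨h1, h2⟩ <;>
          rcases le_total y β' with h3 | h3 <;>
          rcases le_total w β' with h4 | h4 <;>
          rcases abs_cases (w - β') with ⟨e1, _⟩ | ⟨e1, _⟩ <;>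
          rcases abs_cases (y - β') with ⟨e2, _⟩ | ⟨e2, _⟩ <;> linarith
      have h2 : dist (cm w) x ≤ |w - β'| := by
        rw [dist_eq_norm, ← hβ'x, ← QuotientAddGroup.mk_sub]
        exact S1.norm_coe_le _
      exact hball (Metric.mem_ball.2 (lt_of_le_of_lt (h2.trans h1) hyβ'))
    have hβ'K : β' ∈ K := by
      have hsub : uIcc y β' ⊆ connectedComponentIn J y :=
        isPreconnected_uIcc.subset_connectedComponentIn left_mem_uIcc hseg
      rw [← connectedComponentIn_eq hyK] at hsub
      exact hsub right_mem_uIcc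
    exact ⟨β', hβ'K, hβ'x⟩
  have hKopen : IsOpen K := (hS.preimage continuous_quotient_mk').connectedComponentIn
  have hUopen : IsOpen (cm '' K) := QuotientAddGroup.isOpenMap_coe K hKopen
  intro x hxI
  have hxS : x ∈ S := connectedComponentIn_subset S _ hxI
  by_cases hx : x ∈ closure (cm '' K)
  · exact hclos x hxS hx
  · exfalso
    have hI : IsPreconnected (connectedComponentIn S (α : S1)) := isPreconnected_connectedComponentIn
    have hcover : connectedComponentIn S (α : S1) ⊆ cm '' K ∪ (closure (cm '' K))ᶜ := by
      intro z hz
      by_cases hzc : z ∈ closure (cm '' K)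
      · exact Or.inl (hclos z (connectedComponentIn_subset S _ hz) hzc)
      · exact Or.inr hzc
    obtain ⟨z, _, hz1, hz2⟩ := hI (cm '' K) (closure (cm '' K))ᶜ hUopen isClosed_closure.isOpen_compl
      hcover ⟨(α : S1), mem_connectedComponentIn hα, ⟨α, mem_connectedComponentIn hαJ, rfl⟩⟩
      ⟨x, hxI, hx⟩
    exact hz2 (subset_closure hz1)

lemma comp_isOpen {S : Set S1} (hS : IsOpen S) {α : ℝ} (hα : (α : S1) ∈ S) :
    IsOpen (connectedComponentIn S (α : S1)) := by
  rw [comp_eq_image hS hα]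
  exact QuotientAddGroup.isOpenMap_coe _ ((hS.preimage continuous_quotient_mk').connectedComponentIn)

lemma volume_comp_ge_aux {S : Set S1} (hS : IsOpen S) {α : ℝ} (hα : (α : S1) ∈ S) {a b : S1}
    (ha : a ∈ connectedComponentIn S (α : S1)) (hb : b ∈ connectedComponentIn S (α : S1)) :
    ENNReal.ofReal (dist a b) ≤ volume (connectedComponentIn S (α : S1)) := by
  have hpi : (0:ℝ) < 2 * π := by positivity
  set cm : ℝ → S1 := ((↑) : ℝ → S1) with hcm
  set J : Set ℝ := cm ⁻¹' S with hJdef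
  set K := connectedComponentIn J α with hKdef
  rw [comp_eq_image hS hα] at ha hb ⊢
  obtain ⟨α', hα'K, rfl⟩ := ha
  obtain ⟨β', hβ'K, rfl⟩ := hb
  set γ := min α' β' with hγdef
  set m := min (2*π) |α' - β'| with hmdef
  have hm0 : 0 ≤ m := le_min hpi.le (abs_nonneg _)
  have hm2π : m ≤ 2 * π := min_le_left _ _
  have hd1 : dist (cm α') (cm β') ≤ |α' - β'| := by
    rw [dist_eq_norm, ← QuotientAddGroup.mk_sub]
    exact S1.norm_coe_le _
  have hd2 : dist (cm α') (cm β') ≤ 2 * π := by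
    rw [dist_eq_norm]
    have := S1.norm_le_pi (cm α' - cm β')
    linarith [pi_pos]
  have hdm : dist (cm α') (cm β') ≤ m := le_min hd2 hd1
  have hMK : Ioc γ (γ + m) ⊆ K := by
    have h1 : Ioc γ (γ + m) ⊆ uIcc α' β' := by
      intro w hw
      rw [Set.uIcc_eq_union]
      have hmax : max α' β' = γ + |α' - β'| := by
        rw [hγdef]
        rcases le_total α' β' with h | h
        · rw [max_eq_right h, min_eq_left h, abs_of_nonpos (by linarith)]; ring
        · rw [max_eq_left h, min_eq_right h, abs_of_nonneg (by linarith)]; ring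
      have hw1 : γ ≤ w := hw.1.le
      have hw2 : w ≤ max α' β' := by
        rw [hmax]
        calc w ≤ γ + m := hw.2
          _ ≤ γ + |α' - β'| := by linarith [min_le_right (2*π) |α' - β'|]
      rcases le_total α' β' with h | h
      · exact Or.inl ⟨by simpa [hγdef, min_eq_left h] using hw1, by simpa [max_eq_right h] using hw2⟩
      · exact Or.inr ⟨by simpa [hγdef, min_eq_right h] using hw1, by simpa [max_eq_left h] using hw2⟩
    exact h1.trans (isPreconnected_connectedComponentIn.ordConnected.uIcc_subset hα'K hβ'K)
  have hKopen : IsOpen K := (hS.preimage continuous_quotient_mk').connectedComponentIn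
  have hcmm : Measurable cm := QuotientAddGroup.measurable_coe
  have hImeas : MeasurableSet (cm '' K) :=
    (QuotientAddGroup.isOpenMap_coe K hKopen).measurableSet
  have h2 : Measure.map cm (volume.restrict (Ioc γ (γ + 2*π))) = volume :=
    (AddCircle.measurePreserving_mk (2*π) γ).map_eq
  have h1 : Measure.map cm (volume.restrict (Ioc γ (γ + m)))
      ≤ Measure.map cm (volume.restrict (Ioc γ (γ + 2*π))) :=
    Measure.map_mono (Measure.restrict_mono (Ioc_subset_Ioc_right (by linarith)) le_rfl)
      hcmm
  have h3 : ENNReal.ofReal m ≤ Measure.map cm (volume.restrict (Ioc γ (γ + m))) (cm '' K) := by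
    rw [Measure.map_apply hcmm hImeas,
      Measure.restrict_apply (hcmm hImeas)]
    calc ENNReal.ofReal m = volume (Ioc γ (γ + m)) := by
          rw [Real.volume_Ioc, add_sub_cancel_left]
      _ ≤ volume (cm ⁻¹' (cm '' K) ∩ Ioc γ (γ + m)) :=
          measure_mono (subset_inter (hMK.trans (subset_preimage_image _ _)) Subset.rfl)
  calc ENNReal.ofReal (dist (cm α') (cm β')) ≤ ENNReal.ofReal m := ENNReal.ofReal_le_ofReal hdm
    _ ≤ Measure.map cm (volume.restrict (Ioc γ (γ + m))) (cm '' K) := h3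
    _ ≤ Measure.map cm (volume.restrict (Ioc γ (γ + 2*π))) (cm '' K) := h1 _
    _ = volume (cm '' K) := by rw [h2]

lemma volume_comp_ge {S : Set S1} (hS : IsOpen S) {α : ℝ} (hα : (α : S1) ∈ S) {a b : S1}
    (ha : a ∈ closure (connectedComponentIn S (α : S1)))
    (hb : b ∈ closure (connectedComponentIn S (α : S1))) :
    ENNReal.ofReal (dist a b) ≤ volume (connectedComponentIn S (α : S1)) := by
  refine ENNReal.le_of_forall_pos_le_add fun ε hε _ => ?_
  have hε2 : (0:ℝ) < (ε:ℝ) / 2 := by positivity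
  obtain ⟨a', ha', hda⟩ := Metric.mem_closure_iff.1 ha ((ε:ℝ)/2) hε2
  obtain ⟨b', hb', hdb⟩ := Metric.mem_closure_iff.1 hb ((ε:ℝ)/2) hε2
  have h1 : dist a b ≤ dist a' b' + (ε:ℝ) := by
    have := dist_triangle a a' b
    have := dist_triangle a' b' b
    have := dist_comm b b'
    linarith [dist_triangle a a' b, dist_triangle a' b' b, dist_comm b' b ▸ hdb]
  calc ENNReal.ofReal (dist a b) ≤ ENNReal.ofReal (dist a' b' + (ε:ℝ)) :=
        ENNReal.ofReal_le_ofReal h1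
    _ ≤ ENNReal.ofReal (dist a' b') + ENNReal.ofReal (ε:ℝ) := ENNReal.ofReal_add_le
    _ ≤ volume (connectedComponentIn S (α : S1)) + ε := by
        rw [ENNReal.ofReal_coe_nnreal]
        exact add_le_add_left (volume_comp_ge_aux hS hα ha' hb') _

lemma count_bound {𝒞 : Set (Set S1)} {δ : ℝ} (hδ : 0 < δ)
    (hdisj : 𝒞.Pairwise Disjoint)
    (hmeas : ∀ I ∈ 𝒞, MeasurableSet I)
    (hvol : ∀ I ∈ 𝒞, ENNReal.ofReal δ ≤ volume I) :
    𝒞.Finite ∧ (𝒞.ncard : ℝ) * δ ≤ 2 * π := by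
  have hfs : ∀ F : Finset (Set S1), ↑F ⊆ 𝒞 → (F.card : ℝ) * δ ≤ 2 * π := by
    intro F hF
    have hpd : (↑F : Set (Set S1)).PairwiseDisjoint (id : Set S1 → Set S1) :=
      fun I hI J hJ hIJ => hdisj (hF hI) (hF hJ) hIJ
    have h1 : (F.card : ℝ≥0∞) * ENNReal.ofReal δ ≤ ENNReal.ofReal (2 * π) := by
      calc (F.card : ℝ≥0∞) * ENNReal.ofReal δ = ∑ _I ∈ F, ENNReal.ofReal δ := by
            rw [Finset.sum_const, nsmul_eq_mul]
        _ ≤ ∑ I ∈ F, volume I := Finset.sum_le_sum fun I hI => hvol I (hF hI)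
        _ = volume (⋃ I ∈ F, I) :=
            (measure_biUnion_finset hpd fun I hI => hmeas I (hF hI)).symm
        _ ≤ volume univ := measure_mono (subset_univ _)
        _ = ENNReal.ofReal (2 * π) := AddCircle.measure_univ (2*π)
    rw [← ENNReal.ofReal_natCast F.card, ← ENNReal.ofReal_mul (by positivity)] at h1
    exact (ENNReal.ofReal_le_ofReal_iff (by positivity)).1 h1
  have hfin : 𝒞.Finite := by
    by_contra hinf
    obtain ⟨t, ht𝒞, htfin, htcard⟩ :=
      Set.Infinite.exists_subset_ncard_eq hinf (⌊2 * π / δ⌋₊ + 1)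
    have hb := hfs htfin.toFinset (by simpa using ht𝒞)
    rw [← Set.ncard_eq_toFinset_card t htfin, htcard] at hb
    have h2 : 2 * π / δ < (⌊2 * π / δ⌋₊ : ℝ) + 1 := Nat.lt_floor_add_one _
    rw [div_lt_iff₀ hδ] at h2
    push_cast at hb
    linarith
  refine ⟨hfin, ?_⟩
  have hb := hfs hfin.toFinset (by simp)
  rwa [← Set.ncard_eq_toFinset_card 𝒞 hfin] at hb

lemma mrl_le (u : S1 → E2) (hu : Continuous u) {r δ : ℝ} (hr : 0 < r) (hδ : 0 < δ)
    (hmod : ∀ x y : S1, dist x y < δ → dist (u x) (u y) < r) (q n : E2) (hn : ‖n‖ = 1) :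
    Mrl u r q n ≤ (⌊2 * π / δ⌋₊ : ℕ∞) := by
  have hstrip : IsOpen (lineStrip q n (r / 2)) := by
    have hcont : Continuous fun p : E2 => |(inner ℝ (p - q) n : ℝ)| :=
      ((continuous_id.sub continuous_const).inner continuous_const).abs
    exact isOpen_lt hcont continuous_const
  have hSopen : IsOpen (u ⁻¹' lineStrip q n (r / 2)) := hstrip.preimage hu
  set S := u ⁻¹' lineStrip q n (r / 2) with hSdef
  have hdisj : (MrlSet u r q n).Pairwise Disjoint := by
    rintro I ⟨⟨x, hxS, rfl⟩, -, -⟩ J ⟨⟨y, hyS, rfl⟩, -, -⟩ hne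
    by_contra hnd
    obtain ⟨z, hz1, hz2⟩ := Set.not_disjoint_iff.1 hnd
    exact hne ((connectedComponentIn_eq hz1).trans (connectedComponentIn_eq hz2).symm)
  have hprop : ∀ I ∈ MrlSet u r q n, MeasurableSet I ∧ ENNReal.ofReal δ ≤ volume I := by
    rintro I ⟨⟨x, hxS, rfl⟩, ⟨p₁, hp₁, hip₁⟩, ⟨p₂, hp₂, hip₂⟩⟩
    obtain ⟨α, rfl⟩ := QuotientAddGroup.mk_surjective x
    refine ⟨(comp_isOpen hSopen hxS).measurableSet, ?_⟩
    have hcc : closure (u '' connectedComponentIn S (α : S1))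
        ⊆ u '' closure (connectedComponentIn S (α : S1)) :=
      closure_minimal (image_mono (f := u) subset_closure)
        (IsCompact.image isClosed_closure.isCompact hu).isClosed
    obtain ⟨x₁, hx₁, hpx₁⟩ := hcc hp₁
    obtain ⟨x₂, hx₂, hpx₂⟩ := hcc hp₂
    have hinner : (inner ℝ (p₁ - p₂) n : ℝ) = r := by
      have h : p₁ - p₂ = (p₁ - q) - (p₂ - q) := by abel
      rw [h, inner_sub_left, hip₁, hip₂]; ring
    have hdist : r ≤ dist p₁ p₂ := by
      have h := abs_real_inner_le_norm (p₁ - p₂) n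
      rw [hinner, hn, mul_one, abs_of_pos hr] at h
      rwa [dist_eq_norm]
    have hdxy : δ ≤ dist x₁ x₂ := by
      by_contra hlt
      have := hmod x₁ x₂ (lt_of_not_ge hlt)
      rw [hpx₁, hpx₂] at this
      exact absurd this (not_lt.2 hdist)
    calc ENNReal.ofReal δ ≤ ENNReal.ofReal (dist x₁ x₂) := ENNReal.ofReal_le_ofReal hdxy
      _ ≤ volume (connectedComponentIn S (α : S1)) := volume_comp_ge hSopen hxS hx₁ hx₂
  obtain ⟨hfin, hcard⟩ := count_bound hδ hdisj (fun I hI => (hprop I hI).1) fun I hI => (hprop I hI).2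
  rw [Mrl, Set.encard_le_coe_iff_finite_ncard_le]
  exact ⟨hfin, Nat.le_floor (by rw [le_div_iff₀ hδ]; exact hcard)⟩


/-- For every continuous `u : S¹ → ℝ²` and `r > 0` the `r`-multiplicity
`M_r(u)` is finite; in fact, if `δ > 0` is such that `d(x,y) < δ` implies
`|u(x) − u(y)| < r`, then `M_r(u) ≤ 2π/δ`. -/
theorem stmt8 (u : S1 → E2) (hu : Continuous u) (r : ℝ) (hr : 0 < r) :
    Mr u r < ⊤ ∧
      ∀ δ : ℝ, 0 < δ → (∀ x y : S1, dist x y < δ → dist (u x) (u y) < r) →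
        (Mr u r : ℝ≥0∞) ≤ ENNReal.ofReal (2 * π / δ) := by
  have key : ∀ δ : ℝ, 0 < δ → (∀ x y : S1, dist x y < δ → dist (u x) (u y) < r) →
      Mr u r ≤ (⌊2 * π / δ⌋₊ : ℕ∞) := by
    intro δ hδ hmod
    exact iSup_le fun q => iSup_le fun n => iSup_le fun hn => mrl_le u hu hr hδ hmod q n hn
  constructor
  · have hUC : UniformContinuous u := CompactSpace.uniformContinuous_of_continuous hu
    obtain ⟨δ₀, hδ₀, hmod₀⟩ := Metric.uniformContinuous_iff.1 hUC r hr
    exact lt_of_le_of_lt (key δ₀ hδ₀ fun x y h => hmod₀ h)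
      (lt_top_iff_ne_top.2 (by simp))
  · intro δ hδ hmod
    calc (Mr u r : ℝ≥0∞) ≤ ((⌊2 * π / δ⌋₊ : ℕ∞) : ℝ≥0∞) := ENat.toENNReal_le.2 (key δ hδ hmod)
      _ = ((⌊2 * π / δ⌋₊ : ℕ) : ℝ≥0∞) := ENat.toENNReal_coe _
      _ ≤ ENNReal.ofReal (2 * π / δ) := by
          rw [← ENNReal.ofReal_natCast]
          exact ENNReal.ofReal_le_ofReal (Nat.floor_le (by positivity))
end
end

section
/- Let u : S¹ → ℝ² be a continuous map. For each r > 0 there is a constant C = C(r,u) such that if (γ_n) is a sequence of continuous maps γ_n : S¹ → ℝ² converging uniformly to u, then M_r(γ_n) ≤ C for all n with sup_{x∈S¹} |γ_n(x) − u(x)| < r/4. -/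
open Set Function Metric MeasureTheory Real Filter
open scoped ENNReal NNReal

noncomputable section

lemma dist_coe_le_abs (p x y : ℝ) :
    dist ((x : AddCircle p)) ((y : AddCircle p)) ≤ |x - y| := by
  rw [dist_eq_norm]
  have h : ((x : AddCircle p)) - ((y : AddCircle p)) = (((x - y : ℝ)) : AddCircle p) := by
    norm_cast
  rw [h]
  exact (QuotientAddGroup.norm_mk_le_norm (m := x - y)).trans_eq (Real.norm_eq_abs _)

lemma norm_coe_int_mul_div_le {p : ℝ} (hp : 0 < p) (N : ℕ) (m : ℤ) (hm0 : m ≠ 0)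
    (hmN : |m| < N) : p / N ≤ ‖((m * (p / N) : ℝ) : AddCircle p)‖ := by
  rw [AddCircle.norm_eq]
  set h := p / N with hh
  have hN1 : 1 ≤ N := by
    have h1 := Int.one_le_abs hm0
    omega
  have hh0 : 0 < h := by positivity
  set k : ℤ := round (p⁻¹ * (m * h)) with hk
  have hmk : (m : ℝ) * h - k * p = ((m - k * N : ℤ) : ℝ) * h := by
    push_cast
    have : (N : ℝ) ≠ 0 := by positivity
    field_simp [hh]
    have hhN : h * N = p := by rw [hh]; exact div_mul_cancel₀ p this
    linear_combination (k:ℝ) * hhN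
  rw [hmk, abs_mul, abs_of_pos hh0]
  have hne : m - k * N ≠ 0 := by
    intro hcon
    have hm : m = k * N := by omega
    rcases eq_or_ne k 0 with hk0 | hk0
    · rw [hk0] at hm; simp at hm; omega
    · have h1 : (1:ℤ) ≤ |k| := Int.one_le_abs hk0
      have : (N:ℤ) ≤ |m| := by
        rw [hm, abs_mul, Int.abs_natCast]
        nlinarith [abs_nonneg k]
      omega
  have : (1:ℝ) ≤ |((m - k * N : ℤ) : ℝ)| := by
    rw [← Int.cast_abs]
    exact_mod_cast Int.one_le_abs hne
  nlinarith

/-- A preconnected subset of the circle containing two points at distance at least `δ`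
must contain one of the `N` equally spaced net points, provided `2π/N < δ`. -/
lemma net_point_mem {δ : ℝ} (hδ : 0 < δ) {N : ℕ} (hN1 : 1 ≤ N) (hNδ : 2 * π / N < δ)
    {T : Set S1} (hT : IsPreconnected T) {x y : S1} (hx : x ∈ T) (hy : y ∈ T)
    (hxy : δ ≤ dist x y) :
    ∃ j : ℕ, j < N ∧ (((j : ℝ) * (2 * π / N) : ℝ) : S1) ∈ T := by
  by_contra hcon
  push_neg at hcon
  have hp : 0 < 2 * π := by positivity
  set h : ℝ := 2 * π / N with hh'
  have hh : 0 < h := by positivity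
  set c : ℕ → S1 := fun j => ((((j : ℝ) + 1/2) * h : ℝ) : S1) with hc
  set B : ℕ → Set S1 := fun j => Metric.ball (c j) (h / 2) with hB
  -- distance between centers
  have hdist : ∀ j k : ℕ, j < N → k < N → j ≠ k → h ≤ dist (c j) (c k) := by
    intro j k hj hk hjk
    have he : dist (c j) (c k)
        = ‖(((((j:ℝ) + 1/2) * h - (((k:ℝ) + 1/2) * h)) : ℝ) : AddCircle (2*π))‖ := by
      rw [dist_eq_norm, hc]
      norm_cast
    have he2 : (((j:ℝ) + 1/2) * h - (((k:ℝ) + 1/2) * h)) = (((j:ℤ) - (k:ℤ) : ℤ) : ℝ) * h := by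
      push_cast; ring
    rw [he, he2, hh']
    exact norm_coe_int_mul_div_le hp N _ (by omega)
      (abs_sub_lt_iff.mpr ⟨by omega, by omega⟩)
  -- disjointness of balls
  have hdisj : ∀ j k : ℕ, j < N → k < N → j ≠ k → Disjoint (B j) (B k) := by
    intro j k hj hk hjk
    rw [Set.disjoint_left]
    intro z hzj hzk
    have h1 : dist z (c j) < h / 2 := mem_ball.mp hzj
    have h2 : dist z (c k) < h / 2 := mem_ball.mp hzk
    have := dist_triangle (c j) z (c k)
    rw [dist_comm (c j) z] at this
    have := hdist j k hj hk hjk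
    linarith
  -- coverage of T
  have hcov : ∀ z ∈ T, ∃ j : ℕ, j < N ∧ z ∈ B j := by
    intro z hz
    set w : ℝ := ((AddCircle.equivIco (2*π) 0 z : ℝ)) with hw
    have hwz : ((w : ℝ) : S1) = z := by
      show (AddCircle.equivIco (2*π) 0).symm (AddCircle.equivIco (2*π) 0 z) = z
      exact (AddCircle.equivIco (2*π) 0).symm_apply_apply z
    have hw0 : 0 ≤ w := by
      have := (AddCircle.equivIco (2*π) 0 z).2
      simpa using this.1
    have hwp : w < 2 * π := by
      have := (AddCircle.equivIco (2*π) 0 z).2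
      simpa using this.2
    set j : ℕ := (⌊w / h⌋).toNat with hj
    have hfl0 : (0:ℤ) ≤ ⌊w / h⌋ := Int.floor_nonneg.mpr (div_nonneg hw0 hh.le)
    have hjc : ((j : ℝ)) = ((⌊w / h⌋ : ℤ) : ℝ) := by
      rw [hj]; exact_mod_cast congrArg (Int.cast : ℤ → ℝ) (Int.toNat_of_nonneg hfl0)
    have hjw : (j : ℝ) * h ≤ w := by
      have := Int.floor_le (w / h)
      rw [← hjc] at this
      calc (j:ℝ) * h ≤ (w / h) * h := by nlinarith
        _ = w := by field_simp
    have hwj : w < ((j : ℝ) + 1) * h := by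
      have := Int.lt_floor_add_one (w / h)
      rw [← hjc] at this
      have : w / h * h < ((j:ℝ) + 1) * h := by nlinarith
      calc w = (w / h) * h := by field_simp
        _ < ((j:ℝ) + 1) * h := this
    have hjN : j < N := by
      by_contra hjN
      push_neg at hjN
      have : (N : ℝ) * h ≤ (j : ℝ) * h := by
        have : (N:ℝ) ≤ (j:ℝ) := by exact_mod_cast hjN
        nlinarith
      have hNh : (N : ℝ) * h = 2 * π := by
        rw [hh']
        field_simp
      linarith
    rcases eq_or_lt_of_le hjw with heq | hlt
    · exact absurd (show ((↑j * h : ℝ) : S1) ∈ T by rw [heq, hwz]; exact hz) (hcon j hjN)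
    · refine ⟨j, hjN, ?_⟩
      have hd : dist z (c j) ≤ |w - ((j:ℝ) + 1/2) * h| := by
        rw [← hwz, hc]
        exact dist_coe_le_abs _ _ _
      have habs : |w - ((j:ℝ) + 1/2) * h| < h / 2 := by
        rw [abs_lt]
        constructor <;> nlinarith
      exact mem_ball.mpr (lt_of_le_of_lt hd habs)
  -- clopen argument
  obtain ⟨j0, hj0N, hxB⟩ := hcov x hx
  set V : Set S1 := ⋃ k ∈ {k : ℕ | k < N ∧ k ≠ j0}, B k with hV
  have hsub : T ⊆ B j0 := by
    refine IsPreconnected.subset_left_of_subset_union (v := V) isOpen_ball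
      (isOpen_biUnion fun _ _ => isOpen_ball) ?_ ?_ ⟨x, hx, hxB⟩ hT
    · rw [Set.disjoint_left]
      intro z hzj hzU
      obtain ⟨k, hk, hzk⟩ := mem_iUnion₂.mp hzU
      exact Set.disjoint_left.mp (hdisj j0 k hj0N hk.1 (Ne.symm hk.2)) hzj hzk
    · intro z hz
      obtain ⟨k, hkN, hzB⟩ := hcov z hz
      by_cases hk : k = j0
      · left; rwa [hk] at hzB
      · right; exact mem_biUnion (⟨hkN, hk⟩ : k ∈ {k : ℕ | k < N ∧ k ≠ j0}) hzB
  have h1 : dist x (c j0) < h / 2 := mem_ball.mp (hsub hx)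
  have h2 : dist y (c j0) < h / 2 := mem_ball.mp (hsub hy)
  have := dist_triangle x (c j0) y
  rw [dist_comm (c j0) y] at this
  linarith

/-- Let `u : S¹ → ℝ²` be continuous. For each `r > 0` there is a constant
`C = C(r,u)` such that if `γ_n → u` uniformly, then `M_r(γ_n) ≤ C` for all `n` with
`sup_x |γ_n(x) − u(x)| < r/4`. -/
theorem stmt9 (u : S1 → E2) (hu : Continuous u) (r : ℝ) (hr : 0 < r) :
    ∃ C : ℝ, ∀ γ : ℕ → S1 → E2,
      (∀ n, Continuous (γ n)) →
      TendstoUniformly γ u Filter.atTop →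
      ∀ n : ℕ, (∀ x : S1, dist (γ n x) (u x) < r / 4) →
        (Mr (γ n) r : ℝ≥0∞) ≤ ENNReal.ofReal C := by
  classical
  have hucont : UniformContinuous u := CompactSpace.uniformContinuous_of_continuous hu
  obtain ⟨δ, hδ, hδu⟩ := Metric.uniformContinuous_iff.mp hucont (r / 4) (by positivity)
  obtain ⟨N, hNgt⟩ := exists_nat_gt (2 * π / δ)
  have hN1 : 1 ≤ N := by
    by_contra hcon
    push_neg at hcon
    interval_cases N
    have : 0 < 2 * π / δ := by positivity
    simp at hNgt
    linarith
  have hNδ : 2 * π / N < δ := by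
    rw [div_lt_iff₀ (by positivity : (0:ℝ) < N)]
    calc 2 * π = (2 * π / δ) * δ := by field_simp
      _ < N * δ := mul_lt_mul_of_pos_right hNgt hδ
      _ = δ * N := mul_comm _ _
  refine ⟨(N : ℝ), ?_⟩
  intro γ hγc hγu n hn
  -- the key bound Mr ≤ N
  have key : Mr (γ n) r ≤ (N : ℕ∞) := by
    rw [Mr]
    refine iSup_le fun q => iSup_le fun v => iSup_le fun hv => ?_
    set F : Set S1 := (γ n) ⁻¹' lineStrip q v (r / 2) with hF
    -- each counted component contains a net point
    have hkey : ∀ I ∈ MrlSet (γ n) r q v, ∃ j : ℕ, j < N ∧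
        (((j : ℝ) * (2 * π / N) : ℝ) : S1) ∈ I := by
      intro I hI
      obtain ⟨⟨x0, hx0F, hIeq⟩, ⟨pp, hppcl, hppin⟩, ⟨pm, hpmcl, hpmin⟩⟩ := hI
      have hIconn : IsPreconnected I := by
        rw [hIeq]; exact isPreconnected_connectedComponentIn
      -- find points deep in each side of the strip
      have hfind : ∀ (p : E2), p ∈ closure ((γ n) '' I) →
          ∃ z ∈ I, |(inner ℝ ((γ n) z - q) v : ℝ) - (inner ℝ (p - q) v : ℝ)| < r / 8 := by
        intro p hp
        obtain ⟨b, hbI, hbd⟩ := Metric.mem_closure_iff.mp hp (r / 8) (by positivity)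
        obtain ⟨z, hzI, rfl⟩ := hbI
        refine ⟨z, hzI, ?_⟩
        have he : (inner ℝ ((γ n) z - q) v : ℝ) - (inner ℝ (p - q) v : ℝ)
            = (inner ℝ ((γ n) z - p) v : ℝ) := by
          rw [← inner_sub_left]
          congr 1
          abel
        rw [he]
        calc |(inner ℝ ((γ n) z - p) v : ℝ)| ≤ ‖(γ n) z - p‖ * ‖v‖ := abs_real_inner_le_norm _ _
          _ = dist p ((γ n) z) := by rw [hv, mul_one, ← dist_eq_norm, dist_comm]
          _ < r / 8 := hbd
      obtain ⟨zp, hzpI, hzp⟩ := hfind pp hppcl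
      obtain ⟨zm, hzmI, hzm⟩ := hfind pm hpmcl
      rw [hppin] at hzp
      rw [hpmin] at hzm
      -- distance between γ-images
      have hinner : (3 : ℝ) * r / 4 ≤ (inner ℝ ((γ n) zp - (γ n) zm) v : ℝ) := by
        have he : (inner ℝ ((γ n) zp - (γ n) zm) v : ℝ)
            = (inner ℝ ((γ n) zp - q) v : ℝ) - (inner ℝ ((γ n) zm - q) v : ℝ) := by
          rw [← inner_sub_left]
          congr 1
          abel
        rw [he]
        rw [abs_lt] at hzp hzm
        linarith [hzp.1, hzp.2, hzm.1, hzm.2]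
      have hgd : (3 : ℝ) * r / 4 ≤ dist ((γ n) zp) ((γ n) zm) := by
        calc (3:ℝ) * r / 4 ≤ (inner ℝ ((γ n) zp - (γ n) zm) v : ℝ) := hinner
          _ ≤ ‖(γ n) zp - (γ n) zm‖ * ‖v‖ := real_inner_le_norm _ _
          _ = dist ((γ n) zp) ((γ n) zm) := by rw [hv, mul_one, dist_eq_norm]
      have hud : r / 4 ≤ dist (u zp) (u zm) := by
        have h1 := hn zp
        have h2 := hn zm
        have := dist_triangle ((γ n) zp) (u zp) ((γ n) zm)
        have := dist_triangle (u zp) (u zm) ((γ n) zm)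
        have h3 : dist (u zm) ((γ n) zm) = dist ((γ n) zm) (u zm) := dist_comm _ _
        linarith
      have hzd : δ ≤ dist zp zm := by
        by_contra hcon
        push_neg at hcon
        exact absurd (hδu hcon) (by linarith)
      exact net_point_mem hδ hN1 hNδ hIconn hzpI hzmI hzd
    -- injection into net points
    set qpt : ℕ → S1 := fun j => (((j : ℝ) * (2 * π / N) : ℝ) : S1) with hqpt
    set f : Set S1 → ℕ := fun I =>
      if hI : ∃ j : ℕ, j < N ∧ qpt j ∈ I then hI.choose else 0 with hf
    have hfmem : ∀ I ∈ MrlSet (γ n) r q v, f I < N ∧ qpt (f I) ∈ I := by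
      intro I hI
      have he : ∃ j : ℕ, j < N ∧ qpt j ∈ I := hkey I hI
      have : f I = he.choose := by rw [hf]; simp only [dif_pos he]
      rw [this]
      exact he.choose_spec
    have hinj : Set.InjOn f (MrlSet (γ n) r q v) := by
      intro I₁ h₁ I₂ h₂ hf12
      obtain ⟨-, hq1⟩ := hfmem I₁ h₁
      obtain ⟨-, hq2⟩ := hfmem I₂ h₂
      rw [hf12] at hq1
      obtain ⟨x₁, hx₁, hI₁⟩ := h₁.1
      obtain ⟨x₂, hx₂, hI₂⟩ := h₂.1
      subst hI₁
      subst hI₂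
      have e1 := connectedComponentIn_eq hq1
      have e2 := connectedComponentIn_eq hq2
      exact e1.trans e2.symm
    have himg : f '' (MrlSet (γ n) r q v) ⊆ ↑(Finset.range N) := by
      rintro - ⟨I, hI, rfl⟩
      simp only [Finset.coe_range, Set.mem_Iio]
      exact (hfmem I hI).1
    calc Mrl (γ n) r q v = (MrlSet (γ n) r q v).encard := rfl
      _ = (f '' (MrlSet (γ n) r q v)).encard := (hinj.encard_image).symm
      _ ≤ (↑(Finset.range N) : Set ℕ).encard := Set.encard_le_encard himg
      _ = ((Finset.range N).card : ℕ∞) := Set.encard_coe_eq_coe_finsetCard _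
      _ = (N : ℕ∞) := by rw [Finset.card_range]
  calc (Mr (γ n) r : ℝ≥0∞) ≤ ((N : ℕ∞) : ℝ≥0∞) := ENat.toENNReal_le.mpr key
    _ = (N : ℝ≥0∞) := by simp
    _ = ENNReal.ofReal (N : ℝ) := by rw [ENNReal.ofReal_natCast]
end
end
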